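/- Let G be a finite metanilpotent group, i.e., the nilpotent residual γ_∞(G) is nilpotent. Let p be a prime, let P be a Sylow p-subgroup of γ_∞(G), and let H be a Hall p'-subgroup of G (a subgroup whose order is coprime to p and whose index in G is a power of p). Then P = [P,H]. -/

import Mathlib

/-- The fixed-point subgroup `C_G(a)` of the automorphism `φ a`. -/
def centAut {A G : Type*} [Group A] [Group G] (φ : A →* MulAut G) (a : A) : Subgroup G where
  carrier := {g : G | φ a g = g}
  one_mem' := by simp
  mul_mem' := by
    intro x y hx hy
    simp only [Set.mem_setOf_eq, map_mul] at *
    rw [hx, hy]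
  inv_mem' := by
    intro x hx
    simp only [Set.mem_setOf_eq, map_inv] at *
    rw [hx]

/-- The fixed-point subgroup `C_G(B)` of a subgroup `B ≤ A`. -/
def centAutSub {A G : Type*} [Group A] [Group G] (φ : A →* MulAut G) (B : Subgroup A) :
    Subgroup G := ⨅ b ∈ B, centAut φ b

/-- The subgroup `[H, B]` generated by all `h⁻¹ · (φ b h)` with `h ∈ H`, `b ∈ B`. -/
def commAut {A G : Type*} [Group A] [Group G] (φ : A →* MulAut G) (B : Subgroup A)
    (H : Subgroup G) : Subgroup G :=
  Subgroup.closure {x : G | ∃ h ∈ H, ∃ b ∈ B, x = h⁻¹ * φ b h}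

/-- The nilpotent residual `γ_∞(G)`: the last term (= the intersection) of the lower
central series of `G`. -/
def nilpotentResidual (G : Type*) [Group G] : Subgroup G := ⨅ n, (⊤ : Subgroup G).lowerCentralSeries n

namespace Stmt10

open Subgroup Pointwise
open scoped commutatorElement

def lowerCentralSeries (G : Type*) [Group G] (n : ℕ) : Subgroup G :=
  (⊤ : Subgroup G).lowerCentralSeries n

theorem lowerCentralSeries_zero {G : Type*} [Group G] : lowerCentralSeries G 0 = ⊤ := rfl

instance lowerCentralSeries_normal {G : Type*} [Group G] (n : ℕ) :
    (lowerCentralSeries G n).Normal :=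
  Subgroup.lowerCentralSeries_normal ⊤ n

theorem lowerCentralSeries_antitone {G : Type*} [Group G] :
    Antitone (lowerCentralSeries G) :=
  Subgroup.lowerCentralSeries_antitone (S := ⊤)

theorem nilpotent_iff_lowerCentralSeries {G : Type*} [Group G] :
    Group.IsNilpotent G ↔ ∃ n, lowerCentralSeries G n = ⊥ :=
  Subgroup.nilpotent_iff_lowerCentralSeries

private lemma lcs_succ' {G : Type*} [Group G] (n : ℕ) :
    ⁅lowerCentralSeries G n, (⊤ : Subgroup G)⁆ = lowerCentralSeries G (n + 1) := rfl

private lemma sub_eq_of_le_card {G : Type*} [Group G] [Finite G] {H K : Subgroup G} (h : H ≤ K)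
    (hc : Nat.card K ≤ Nat.card H) : H = K := by
  have h1 : Nat.card H ≤ Nat.card K := Subgroup.card_le_of_le h
  have hbij : Function.Bijective (Subgroup.inclusion h) := by
    refine (Nat.bijective_iff_injective_and_card _).mpr ⟨Subgroup.inclusion_injective h, ?_⟩
    omega
  ext x
  refine ⟨fun hx => h hx, fun hx => ?_⟩
  obtain ⟨⟨y, hy⟩, hxy⟩ := hbij.surjective ⟨x, hx⟩
  have : y = x := congrArg Subtype.val hxy
  exact this ▸ hy

private lemma residual_normal (G : Type*) [Group G] : (nilpotentResidual G).Normal := by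
  constructor
  intro x hx g
  rw [nilpotentResidual, Subgroup.mem_iInf] at hx ⊢
  intro n
  exact (lowerCentralSeries_normal n).conj_mem x (hx n) g

private lemma lcs_stab (G : Type*) [Group G] [Finite G] :
    ∃ n, nilpotentResidual G = lowerCentralSeries G n ∧
      lowerCentralSeries G (n + 1) = lowerCentralSeries G n := by
  obtain ⟨n, hn⟩ : ∃ n, Nat.card (lowerCentralSeries G n) =
      sInf (Set.range fun m => Nat.card (lowerCentralSeries G m)) := by
    have := Nat.sInf_mem (s := Set.range fun m => Nat.card (lowerCentralSeries G m))
      ⟨Nat.card (lowerCentralSeries G 0), 0, rfl⟩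
    obtain ⟨n, hn⟩ := this
    exact ⟨n, hn⟩
  have hstab : ∀ m, n ≤ m → lowerCentralSeries G m = lowerCentralSeries G n := by
    intro m hm
    refine sub_eq_of_le_card (lowerCentralSeries_antitone hm) ?_
    rw [hn]
    exact Nat.sInf_le ⟨m, rfl⟩
  refine ⟨n, ?_, hstab (n+1) (by omega)⟩
  apply le_antisymm
  · exact iInf_le _ n
  · refine le_iInf fun m => show lowerCentralSeries G n ≤ lowerCentralSeries G m from ?_
    rcases le_or_gt n m with h | h
    · rw [hstab m h]
    · exact lowerCentralSeries_antitone h.le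

private lemma residual_comm (G : Type*) [Group G] [Finite G] :
    ⁅nilpotentResidual G, (⊤ : Subgroup G)⁆ = nilpotentResidual G := by
  obtain ⟨n, h1, h2⟩ := lcs_stab G
  rw [h1, lcs_succ', h2]

private lemma lcs_map_surj {G H : Type*} [Group G] [Group H] (f : G →* H)
    (hf : Function.Surjective f) (n : ℕ) :
    (lowerCentralSeries G n).map f = lowerCentralSeries H n := by
  induction n with
  | zero =>
    rw [lowerCentralSeries_zero, lowerCentralSeries_zero]
    exact Subgroup.map_top_of_surjective f hf
  | succ n ih =>
    rw [← lcs_succ', ← lcs_succ', Subgroup.map_commutator, ih,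
      Subgroup.map_top_of_surjective f hf]

private lemma residual_quot_nilp (G : Type*) [Group G] [Finite G]
    [hn : (nilpotentResidual G).Normal] :
    Group.IsNilpotent (G ⧸ nilpotentResidual G) := by
  obtain ⟨n, h1, _⟩ := lcs_stab G
  rw [nilpotent_iff_lowerCentralSeries]
  refine ⟨n, ?_⟩
  rw [← lcs_map_surj (QuotientGroup.mk' _) (QuotientGroup.mk'_surjective _) n, ← h1]
  rw [Subgroup.map_eq_bot_iff, QuotientGroup.ker_mk']

private lemma mem_of_orderOf_dvd {Γ : Type*} [Group Γ] [Finite Γ] (Θ : Subgroup Γ)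
    (hn : Θ.Normal) (hcop : (Nat.card Θ).Coprime Θ.index) {x : Γ}
    (hx : orderOf x ∣ Nat.card Θ) : x ∈ Θ := by
  haveI := hn
  have h1 : orderOf (QuotientGroup.mk' Θ x) ∣ Nat.card Θ :=
    (orderOf_map_dvd (QuotientGroup.mk' Θ) x).trans hx
  have h2 : orderOf (QuotientGroup.mk' Θ x) ∣ Θ.index := by
    rw [Subgroup.index_eq_card]; exact orderOf_dvd_natCard _
  have h3 : orderOf (QuotientGroup.mk' Θ x) = 1 :=
    Nat.dvd_one.mp (hcop ▸ Nat.dvd_gcd h1 h2)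
  have h4 : QuotientGroup.mk' Θ x = 1 := orderOf_eq_one_iff.mp h3
  exact (QuotientGroup.eq_one_iff x).mp h4

private lemma orderOf_conj' {Γ : Type*} [Group Γ] (g x : Γ) :
    orderOf (g * x * g⁻¹) = orderOf x := by
  have := orderOf_injective (MulAut.conj g).toMonoidHom (MulAut.conj g).injective x
  simpa [MulAut.conj_apply] using this

private lemma hall_normal {Γ : Type*} [Group Γ] [Finite Γ] (hnil : Group.IsNilpotent Γ)
    (Θ : Subgroup Γ) (hcop : (Nat.card Θ).Coprime Θ.index) : Θ.Normal := by
  have key : ∀ g : Γ, g ∈ (normalizer (Θ : Set Γ)) → orderOf g ∣ Nat.card Θ → g ∈ Θ := by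
    intro g hg hord
    haveI : (Θ.subgroupOf (normalizer (Θ : Set Γ))).Normal := Subgroup.normal_in_normalizer
    have hcard : Nat.card (Θ.subgroupOf (normalizer (Θ : Set Γ))) = Nat.card Θ := by
      have h1 : (Θ.subgroupOf (normalizer (Θ : Set Γ))).map (normalizer (Θ : Set Γ)).subtype = Θ := by
        rw [Subgroup.subgroupOf_map_subtype, inf_eq_left.mpr Subgroup.le_normalizer]
      conv_rhs => rw [← h1]
      exact Nat.card_congr (Subgroup.equivMapOfInjective _ _
        (normalizer (Θ : Set Γ)).subtype_injective).toEquiv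
    have hidx : (Θ.subgroupOf (normalizer (Θ : Set Γ))).index ∣ Θ.index :=
      Subgroup.relIndex_dvd_index_of_le Subgroup.le_normalizer
    have hcop' : (Nat.card (Θ.subgroupOf (normalizer (Θ : Set Γ)))).Coprime
        ((Θ.subgroupOf (normalizer (Θ : Set Γ))).index) := by
      rw [hcard]
      exact hcop.coprime_dvd_right hidx
    have hmem : (⟨g, hg⟩ : (normalizer (Θ : Set Γ))) ∈ Θ.subgroupOf (normalizer (Θ : Set Γ)) := by
      apply mem_of_orderOf_dvd _ Subgroup.normal_in_normalizer hcop'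
      have h5 : orderOf (⟨g, hg⟩ : (normalizer (Θ : Set Γ))) = orderOf g :=
        (orderOf_injective (normalizer (Θ : Set Γ)).subtype (normalizer (Θ : Set Γ)).subtype_injective _).symm
      rw [h5, hcard]; exact hord
    exact Subgroup.mem_subgroupOf.mp hmem
  have hordΘ : ∀ x : Γ, x ∈ Θ → orderOf x ∣ Nat.card Θ := fun x hx =>
    Subgroup.orderOf_dvd_natCard Θ hx
  have hNT : (normalizer (normalizer (Θ : Set Γ) : Set Γ)) ≤ (normalizer (Θ : Set Γ)) := by
    intro g hg
    rw [Subgroup.mem_normalizer_iff]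
    intro h
    constructor
    · intro hh
      refine key _ ?_ ?_
      · exact (Subgroup.mem_normalizer_iff.mp hg h).mp (Subgroup.le_normalizer hh)
      · rw [orderOf_conj']; exact hordΘ h hh
    · intro hh
      have hginv : g⁻¹ ∈ (normalizer (normalizer (Θ : Set Γ) : Set Γ)) := (normalizer (normalizer (Θ : Set Γ) : Set Γ)).inv_mem hg
      have h1 : g⁻¹ * (g * h * g⁻¹) * g⁻¹⁻¹ ∈ (normalizer (Θ : Set Γ)) :=
        (Subgroup.mem_normalizer_iff.mp hginv _).mp (Subgroup.le_normalizer hh)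
      have he : g⁻¹ * (g * h * g⁻¹) * g⁻¹⁻¹ = h := by group
      rw [he] at h1
      refine key _ h1 ?_
      have h6 : orderOf h = orderOf (g * h * g⁻¹) := (orderOf_conj' g h).symm
      rw [h6]; exact hordΘ _ hh
  rw [← Subgroup.normalizer_eq_top_iff]
  by_contra hne
  have hcond := normalizerCondition_of_isNilpotent (G := Γ)
  have hlt := hcond _ (lt_top_iff_ne_top.mpr hne)
  exact lt_irrefl _ (hlt.trans_le hNT)


private lemma aux_le_bot {G : Type*} [Group G] (Sy : Subgroup G)
    (hnil : Group.IsNilpotent ↥Sy) (R : Subgroup G) (hle : R ≤ Sy)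
    (h : R ≤ ⁅R, Sy⁆) : R = ⊥ := by
  have hmt : (⊤ : Subgroup ↥Sy).map Sy.subtype = Sy := by
    rw [← MonoidHom.range_eq_map, Subgroup.range_subtype]
  have key : ∀ n, R ≤ (lowerCentralSeries ↥Sy n).map Sy.subtype := by
    intro n
    induction n with
    | zero => rw [lowerCentralSeries_zero, hmt]; exact hle
    | succ n ih =>
      refine h.trans ?_
      have h2 : ⁅R, Sy⁆ ≤
          ⁅(lowerCentralSeries ↥Sy n).map Sy.subtype, (⊤ : Subgroup ↥Sy).map Sy.subtype⁆ :=
        Subgroup.commutator_mono ih (le_of_eq hmt.symm)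
      refine h2.trans ?_
      rw [← Subgroup.map_commutator, lcs_succ']
  obtain ⟨n, hn⟩ := nilpotent_iff_lowerCentralSeries.mp hnil
  have h3 := key n
  rw [hn] at h3
  simpa [Subgroup.map_bot, le_bot_iff] using h3

private lemma lemmaX {G : Type*} [Group G] [Finite G] {p : ℕ} [Fact p.Prime]
    (R S L : Subgroup G) (hR : R.Normal) (hS : S.Normal) (hSR : S ≤ R)
    (hRp : IsPGroup p R) (hcomm : ⁅R, L⁆ ≤ S) {k : ℕ} (hLidx : L.index = p ^ k)
    (hgen : R ≤ ⁅R, (⊤ : Subgroup G)⁆ ⊔ S) : R ≤ S := by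
  haveI := hR; haveI := hS
  set π : G →* G ⧸ S := QuotientGroup.mk' S with hπdef
  have hπs : Function.Surjective π := QuotientGroup.mk'_surjective S
  set R' : Subgroup (G ⧸ S) := R.map π with hR'def
  haveI hR'n : R'.Normal := hR.map π hπs
  have hR'p : IsPGroup p R' := hRp.map π
  set Z : Subgroup (G ⧸ S) := Subgroup.centralizer (R' : Set (G ⧸ S)) with hZdef
  haveI hZn : Z.Normal := by
    constructor
    intro z hz g
    rw [hZdef, Subgroup.mem_centralizer_iff] at hz ⊢
    intro r hr
    have hr' : g⁻¹ * r * g ∈ R' := by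
      have := hR'n.conj_mem r hr g⁻¹
      simpa [mul_assoc] using this
    have h0 := hz _ hr'
    calc r * (g * z * g⁻¹) = g * ((g⁻¹ * r * g) * z) * g⁻¹ := by group
    _ = g * (z * (g⁻¹ * r * g)) * g⁻¹ := by rw [h0]
    _ = (g * z * g⁻¹) * r := by group
  have hLZ : L.map π ≤ Z := by
    rintro y' hy'
    obtain ⟨l, hl, rfl⟩ := Subgroup.mem_map.mp hy'
    rw [hZdef, Subgroup.mem_centralizer_iff]
    rintro r' hr'
    obtain ⟨x, hx, rfl⟩ := Subgroup.mem_map.mp hr'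
    have h1 : ⁅x, l⁆ ∈ S := hcomm (Subgroup.commutator_mem_commutator hx hl)
    have h2 : ⁅π x, π l⁆ = 1 := by
      rw [← map_commutatorElement]
      exact (QuotientGroup.eq_one_iff _).mpr h1
    exact (commutatorElement_eq_one_iff_mul_comm.mp h2)
  obtain ⟨Sy, hSy⟩ := hR'p.exists_le_sylow
  haveI : Finite (G ⧸ S) := Quotient.finite _
  have hsup : Z ⊔ (Sy : Subgroup (G ⧸ S)) = ⊤ := by
    have hd1 : (Z ⊔ (Sy : Subgroup (G ⧸ S))).index ∣ p ^ k := by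
      refine (Subgroup.index_dvd_of_le le_sup_left).trans ?_
      refine (Subgroup.index_dvd_of_le hLZ).trans ?_
      have h9 := Subgroup.index_map_dvd (H := L) hπs
      rw [hLidx] at h9
      exact h9
    have hd2 : ¬ p ∣ (Z ⊔ (Sy : Subgroup (G ⧸ S))).index := by
      intro hdvd
      exact Sy.not_dvd_index (hdvd.trans (Subgroup.index_dvd_of_le le_sup_right))
    obtain ⟨j, -, hj⟩ := (Nat.dvd_prime_pow Fact.out).mp hd1
    rw [← Subgroup.index_eq_one, hj]
    rcases Nat.eq_zero_or_pos j with h0 | h0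
    · rw [h0, pow_zero]
    · exact absurd (hj ▸ dvd_pow_self p h0.ne') hd2
  have hRtop : R' ≤ ⁅R', (⊤ : Subgroup (G ⧸ S))⁆ := by
    have h1 : R' ≤ Subgroup.map π (⁅R, (⊤ : Subgroup G)⁆ ⊔ S) := Subgroup.map_mono hgen
    have h3 : Subgroup.map π S = ⊥ := by
      rw [Subgroup.map_eq_bot_iff, hπdef, QuotientGroup.ker_mk']
    rwa [Subgroup.map_sup, Subgroup.map_commutator,
      Subgroup.map_top_of_surjective π hπs, h3, sup_bot_eq] at h1
  have hRS' : R' ≤ ⁅R', (Sy : Subgroup (G ⧸ S))⁆ := by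
    refine hRtop.trans ?_
    conv_lhs => rw [← hsup]
    rw [Subgroup.commutator_le]
    intro g₁ hg₁ g₂ hg₂
    have hg₂' : g₂ ∈ ((Z : Set (G ⧸ S)) * ((Sy : Subgroup (G ⧸ S)) : Set (G ⧸ S))) := by
      rw [← Subgroup.normal_mul Z (Sy : Subgroup (G ⧸ S))]; exact hg₂
    obtain ⟨z, hz, s, hs, rfl⟩ := hg₂'
    have hcs : ⁅g₁, s⁆ ∈ ⁅R', (Sy : Subgroup (G ⧸ S))⁆ :=
      Subgroup.commutator_mem_commutator hg₁ hs
    have hzg : g₁ * z = z * g₁ := Subgroup.mem_centralizer_iff.mp hz g₁ hg₁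
    have hzc : ⁅g₁, s⁆ * z = z * ⁅g₁, s⁆ :=
      Subgroup.mem_centralizer_iff.mp hz _ (Subgroup.commutator_le_left _ _ hcs)
    have heq : ⁅g₁, z * s⁆ = ⁅g₁, s⁆ := by
      have hzc' : (g₁ * s * g₁⁻¹ * s⁻¹) * z = z * (g₁ * s * g₁⁻¹ * s⁻¹) := by
        simpa [commutatorElement_def] using hzc
      simp only [commutatorElement_def, mul_inv_rev]
      calc g₁ * (z * s) * g₁⁻¹ * (s⁻¹ * z⁻¹)
          = (g₁ * z) * (s * g₁⁻¹ * s⁻¹) * z⁻¹ := by group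
      _ = (z * g₁) * (s * g₁⁻¹ * s⁻¹) * z⁻¹ := by rw [hzg]
      _ = z * (g₁ * s * g₁⁻¹ * s⁻¹) * z⁻¹ := by group
      _ = ((g₁ * s * g₁⁻¹ * s⁻¹) * z) * z⁻¹ := by rw [hzc']
      _ = g₁ * s * g₁⁻¹ * s⁻¹ := by group
    rw [heq]
    exact hcs
  have hbot : R' = ⊥ :=
    aux_le_bot (Sy : Subgroup (G ⧸ S)) (Sy.isPGroup'.isNilpotent) R' hSy hRS'
  intro x hx
  have h7 : π x ∈ R' := Subgroup.mem_map.mpr ⟨x, hx, rfl⟩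
  rw [hbot, Subgroup.mem_bot] at h7
  exact (QuotientGroup.eq_one_iff x).mp h7


set_option maxHeartbeats 1000000 in
private lemma main_aux (G : Type) [Group G] [Finite G] (p : ℕ) (hp : p.Prime)
    (N : Subgroup G) (hNnorm : N.Normal) (hmeta : Group.IsNilpotent ↥N)
    (hNcomm : ⁅N, (⊤ : Subgroup G)⁆ = N) (hΓnil : Group.IsNilpotent (G ⧸ N))
    (P₀ : Subgroup ↥N) (hPcop : (Nat.card P₀).Coprime P₀.index)
    (hPnd : ¬ p ∣ P₀.index) (hP₀p : IsPGroup p P₀)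
    (H : Subgroup G) (hH : ¬ p ∣ Nat.card H) (hHi : ∃ k : ℕ, H.index = p ^ k) :
    P₀.map N.subtype = ⁅P₀.map N.subtype, H⁆ := by
  haveI hpF : Fact p.Prime := ⟨hp⟩
  haveI := hNnorm
  set P' : Subgroup G := P₀.map N.subtype with hP'def
  have hP'N : P' ≤ N := Subgroup.map_subtype_le _
  have hP'p : IsPGroup p P' := hP₀p.map _
  have hP₀norm : P₀.Normal := hall_normal hmeta P₀ hPcop
  have hcardP' : Nat.card P' = Nat.card P₀ :=
    (Nat.card_congr (Subgroup.equivMapOfInjective _ _ N.subtype_injective).toEquiv).symm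
  -- membership characterizations
  have hmemP₀ : ∀ x : ↥N, orderOf x ∣ Nat.card P₀ → x ∈ P₀ := fun x hx =>
    mem_of_orderOf_dvd P₀ hP₀norm hPcop hx
  have hordsub : ∀ (x : ↥N), orderOf x = orderOf (x : G) :=
    fun x => (orderOf_injective N.subtype N.subtype_injective x).symm
  -- P' is normal in G
  haveI hP'norm : P'.Normal := by
    constructor
    intro x hx g
    obtain ⟨y, hy, rfl⟩ := Subgroup.mem_map.mp hx
    have hgN : g * (y : G) * g⁻¹ ∈ N := hNnorm.conj_mem _ y.2 g
    refine Subgroup.mem_map.mpr ⟨⟨g * (y : G) * g⁻¹, hgN⟩, ?_, rfl⟩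
    apply hmemP₀
    rw [hordsub]
    show orderOf (g * (y : G) * g⁻¹) ∣ _
    rw [orderOf_conj', ← hordsub y]
    exact Subgroup.orderOf_dvd_natCard P₀ hy
  -- Schur-Zassenhaus complement K₀ in N
  haveI := hP₀norm
  obtain ⟨K₀, hK₀⟩ := Subgroup.exists_right_complement'_of_coprime hPcop
  set K : Subgroup G := K₀.map N.subtype with hKdef
  have hKN : K ≤ N := Subgroup.map_subtype_le _
  have hcardK₀ : Nat.card K₀ = P₀.index := by
    have h1 : Nat.card P₀ * Nat.card K₀ = Nat.card ↥N := hK₀.card_mul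
    have h2 : Nat.card P₀ * P₀.index = Nat.card ↥N := P₀.card_mul_index
    exact Nat.eq_of_mul_eq_mul_left Nat.card_pos (h1.trans h2.symm)
  have hpK₀ : ¬ p ∣ Nat.card K₀ := by
    rw [hcardK₀]; exact hPnd
  have hK₀idx : K₀.index = Nat.card P₀ := by
    have h1 : Nat.card K₀ * K₀.index = Nat.card ↥N := K₀.card_mul_index
    have h2 : Nat.card K₀ * Nat.card P₀ = Nat.card ↥N := by
      rw [Nat.mul_comm]; exact hK₀.card_mul
    exact Nat.eq_of_mul_eq_mul_left Nat.card_pos (h1.trans h2.symm)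
  have hK₀cop : (Nat.card K₀).Coprime K₀.index := by
    rw [hK₀idx, hcardK₀]
    exact hPcop.symm
  have hK₀norm : K₀.Normal := hall_normal hmeta K₀ hK₀cop
  have hmemK₀ : ∀ x : ↥N, orderOf x ∣ Nat.card K₀ → x ∈ K₀ := fun x hx =>
    mem_of_orderOf_dvd K₀ hK₀norm hK₀cop hx
  have hKnorm : K.Normal := by
    constructor
    intro x hx g
    obtain ⟨y, hy, rfl⟩ := Subgroup.mem_map.mp hx
    have hgN : g * (y : G) * g⁻¹ ∈ N := hNnorm.conj_mem _ y.2 g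
    refine Subgroup.mem_map.mpr ⟨⟨g * (y : G) * g⁻¹, hgN⟩, ?_, rfl⟩
    apply hmemK₀
    rw [hordsub]
    show orderOf (g * (y : G) * g⁻¹) ∣ _
    rw [orderOf_conj', ← hordsub y]
    exact Subgroup.orderOf_dvd_natCard K₀ hy
  have hNsup : P' ⊔ K = N := by
    rw [hP'def, hKdef, ← Subgroup.map_sup, hK₀.sup_eq_top, ← MonoidHom.range_eq_map,
      Subgroup.range_subtype]
  have hPKbot : P' ⊓ K = ⊥ := by
    rw [hP'def, hKdef, ← Subgroup.map_inf P₀ K₀ N.subtype N.subtype_injective,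
      disjoint_iff.mp hK₀.disjoint, Subgroup.map_bot]
  -- K centralizes P' elementwise
  have hPKcomm : ∀ x ∈ P', ∀ k' ∈ K, k' * x * k'⁻¹ = x := by
    intro x hx k' hk'
    have h1 : k' * x * k'⁻¹ * x⁻¹ ∈ P' :=
      P'.mul_mem (hP'norm.conj_mem x hx k') (P'.inv_mem hx)
    have h2 : k' * x * k'⁻¹ * x⁻¹ ∈ K := by
      have h3 : x * k'⁻¹ * x⁻¹ ∈ K := hKnorm.conj_mem _ (K.inv_mem hk') x
      have h4 : k' * (x * k'⁻¹ * x⁻¹) ∈ K := K.mul_mem hk' h3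
      have he : k' * (x * k'⁻¹ * x⁻¹) = k' * x * k'⁻¹ * x⁻¹ := by group
      rwa [he] at h4
    have h5 : k' * x * k'⁻¹ * x⁻¹ ∈ P' ⊓ K := Subgroup.mem_inf.mpr ⟨h1, h2⟩
    rw [hPKbot, Subgroup.mem_bot] at h5
    exact mul_inv_eq_one.mp h5
  -- D and W
  set D : Subgroup G := ⁅P', P'⁆ with hDdef
  haveI hDnorm : D.Normal := Subgroup.commutator_normal P' P'
  have hDP' : D ≤ P' := Subgroup.commutator_le_left P' P'
  set W : Subgroup G := ⁅P', H⁆ with hWdef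
  have hWP' : W ≤ P' := Subgroup.commutator_le_left P' H
  show P' = W
  -- conjugation stability of W
  have hWconjP : ∀ a ∈ P', ∀ w ∈ W, a * w * a⁻¹ ∈ W := by
    intro a ha w hw
    rw [hWdef, Subgroup.commutator_def] at hw
    refine Subgroup.closure_induction ?_ ?_ ?_ ?_ hw
    · rintro x ⟨g₁, hg₁, g₂, hg₂, rfl⟩
      have e : a * ⁅g₁, g₂⁆ * a⁻¹ = ⁅a * g₁, g₂⁆ * ⁅a, g₂⁆⁻¹ := by
        simp only [commutatorElement_def]; group
      rw [e]
      exact W.mul_mem (Subgroup.commutator_mem_commutator (P'.mul_mem ha hg₁) hg₂)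
        (W.inv_mem (Subgroup.commutator_mem_commutator ha hg₂))
    · simpa using W.one_mem
    · intro x y _ _ hx' hy'
      have e : a * (x * y) * a⁻¹ = (a * x * a⁻¹) * (a * y * a⁻¹) := by group
      rw [e]; exact W.mul_mem hx' hy'
    · intro x _ hx'
      have e : a * x⁻¹ * a⁻¹ = (a * x * a⁻¹)⁻¹ := by group
      rw [e]; exact W.inv_mem hx'
  have hWconjH : ∀ a ∈ H, ∀ w ∈ W, a * w * a⁻¹ ∈ W := by
    intro a ha w hw
    rw [hWdef, Subgroup.commutator_def] at hw
    refine Subgroup.closure_induction ?_ ?_ ?_ ?_ hw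
    · rintro x ⟨g₁, hg₁, g₂, hg₂, rfl⟩
      have e : a * ⁅g₁, g₂⁆ * a⁻¹ = ⁅a * g₁ * a⁻¹, a * g₂ * a⁻¹⁆ := by
        simp only [commutatorElement_def]; group
      rw [e]
      exact Subgroup.commutator_mem_commutator (hP'norm.conj_mem _ hg₁ a)
        (H.mul_mem (H.mul_mem ha hg₂) (H.inv_mem ha))
    · simpa using W.one_mem
    · intro x y _ _ hx' hy'
      have e : a * (x * y) * a⁻¹ = (a * x * a⁻¹) * (a * y * a⁻¹) := by group
      rw [e]; exact W.mul_mem hx' hy'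
    · intro x _ hx'
      have e : a * x⁻¹ * a⁻¹ = (a * x * a⁻¹)⁻¹ := by group
      rw [e]; exact W.inv_mem hx'
  -- M = W ⊔ D
  set M : Subgroup G := W ⊔ D with hMdef
  have hWM : W ≤ M := le_sup_left
  have hDM : D ≤ M := le_sup_right
  have hMP' : M ≤ P' := sup_le hWP' hDP'
  have hMconj : ∀ y : G, (y ∈ P' ∨ y ∈ H ∨ y ∈ K) → ∀ m ∈ M, y * m * y⁻¹ ∈ M := by
    intro y hy m hm
    have hm' : m ∈ ((W : Set G) * (D : Set G)) := by
      rw [← Subgroup.mul_normal W D]; exact hm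
    obtain ⟨w, hw, d, hd, rfl⟩ := hm'
    have e : y * (w * d) * y⁻¹ = (y * w * y⁻¹) * (y * d * y⁻¹) := by group
    rw [e]
    refine M.mul_mem (hWM ?_) (hDM (hDnorm.conj_mem d hd y))
    rcases hy with h | h | h
    · exact hWconjP y h w hw
    · exact hWconjH y h w hw
    · rw [hPKcomm w (hWP' hw) y h]; exact hw
  -- commutator of P' with H ⊔ N lands in M
  have hPLM : ⁅P', H ⊔ N⁆ ≤ M := by
    rw [Subgroup.commutator_le]
    intro g₁ hg₁ g₂ hg₂
    have hHN : H ⊔ N = Subgroup.closure ((H : Set G) ∪ (N : Set G)) := by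
      rw [Subgroup.closure_union, Subgroup.closure_eq, Subgroup.closure_eq]
    rw [hHN] at hg₂
    have main : (∀ m ∈ M, g₂ * m * g₂⁻¹ ∈ M) ∧ (∀ m ∈ M, g₂⁻¹ * m * g₂ ∈ M) ∧
        (∀ x ∈ P', ⁅x, g₂⁆ ∈ M) := by
      refine Subgroup.closure_induction ?_ ?_ ?_ ?_ hg₂
      · rintro z (hz | hz)
        · refine ⟨fun m hm => hMconj z (Or.inr (Or.inl hz)) m hm,
            fun m hm => ?_, fun x hx => hWM (Subgroup.commutator_mem_commutator hx hz)⟩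
          have := hMconj z⁻¹ (Or.inr (Or.inl (H.inv_mem hz))) m hm
          simpa using this
        · -- z ∈ N : decompose z = a * k'
          have hz' : z ∈ ((P' : Set G) * (K : Set G)) := by
            rw [← Subgroup.mul_normal P' K, hNsup]; exact hz
          obtain ⟨a, ha, k', hk', rfl⟩ := hz'
          refine ⟨?_, ?_, ?_⟩
          · intro m hm
            have h1 := hMconj k' (Or.inr (Or.inr hk')) m hm
            have h2 := hMconj a (Or.inl ha) _ h1
            have e : a * (k' * m * k'⁻¹) * a⁻¹ = (a * k') * m * (a * k')⁻¹ := by group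
            rwa [e] at h2
          · intro m hm
            have h1 := hMconj a⁻¹ (Or.inl (P'.inv_mem ha)) m hm
            have h2 := hMconj k'⁻¹ (Or.inr (Or.inr (K.inv_mem hk'))) _ h1
            have e : k'⁻¹ * (a⁻¹ * m * a⁻¹⁻¹) * k'⁻¹⁻¹ = (a * k')⁻¹ * m * (a * k') := by
              group
            rwa [e] at h2
          · intro x hx
            have hcomm : x * k' = k' * x := by
              have h3 := hPKcomm x hx k' hk'
              calc x * k' = k' * (k'⁻¹ * x * k') := by group
              _ = k' * (k'⁻¹ * (k' * x * k'⁻¹) * k') := by rw [h3]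
              _ = k' * x := by group
            have hzero : ⁅x, k'⁆ = 1 := commutatorElement_eq_one_iff_mul_comm.mpr hcomm
            have e : ⁅x, a * k'⁆ = ⁅x, a⁆ * (a * ⁅x, k'⁆ * a⁻¹) := by
              simp only [commutatorElement_def]; group
            rw [e, hzero]
            simpa using hDM (Subgroup.commutator_mem_commutator hx ha)
      · exact ⟨fun m hm => by simpa using hm, fun m hm => by simpa using hm,
          fun x _ => by rw [commutatorElement_one_right]; exact M.one_mem⟩
      · rintro y₁ y₂ _ _ ⟨c11, c12, c13⟩ ⟨c21, c22, c23⟩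
        refine ⟨?_, ?_, ?_⟩
        · intro m hm
          have h1 := c11 _ (c21 m hm)
          have e : y₁ * (y₂ * m * y₂⁻¹) * y₁⁻¹ = (y₁ * y₂) * m * (y₁ * y₂)⁻¹ := by group
          rwa [e] at h1
        · intro m hm
          have h1 := c22 _ (c12 m hm)
          have e : y₂⁻¹ * (y₁⁻¹ * m * y₁) * y₂ = (y₁ * y₂)⁻¹ * m * (y₁ * y₂) := by group
          rwa [e] at h1
        · intro x hx
          have e : ⁅x, y₁ * y₂⁆ = ⁅x, y₁⁆ * (y₁ * ⁅x, y₂⁆ * y₁⁻¹) := by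
            simp only [commutatorElement_def]; group
          rw [e]
          exact M.mul_mem (c13 x hx) (c11 _ (c23 x hx))
      · rintro y _ ⟨c1, c2, c3⟩
        refine ⟨fun m hm => by simpa using c2 m hm, fun m hm => by simpa using c1 m hm, ?_⟩
        intro x hx
        have e : ⁅x, y⁻¹⁆ = y⁻¹ * ⁅x, y⁆⁻¹ * y := by
          simp only [commutatorElement_def]; group
        rw [e]
        have h1 := c2 _ (M.inv_mem (c3 x hx))
        simpa using h1
    exact main.2.2 g₁ hg₁
  -- P' = [P', G]
  have hPtop : ⁅P', (⊤ : Subgroup G)⁆ = P' := by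
    have hR1 : ⁅P', (⊤ : Subgroup G)⁆ ≤ P' := Subgroup.commutator_le_left _ _
    refine le_antisymm hR1 ?_
    haveI : (⁅P', (⊤ : Subgroup G)⁆).Normal := Subgroup.commutator_normal _ _
    haveI : (⁅K, (⊤ : Subgroup G)⁆).Normal := Subgroup.commutator_normal _ _
    set R : Subgroup G := ⁅P', (⊤ : Subgroup G)⁆ ⊔ ⁅K, (⊤ : Subgroup G)⁆ with hRdef
    haveI hRn : R.Normal := Subgroup.sup_normal _ _
    have hNcommR : ∀ n, n ∈ Subgroup.closure ((P' : Set G) ∪ (K : Set G)) →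
        ∀ g : G, ⁅n, g⁆ ∈ R := by
      intro n hn
      refine Subgroup.closure_induction ?_ ?_ ?_ ?_ hn
      · rintro z (hz | hz)
        · exact fun g => (le_sup_left : ⁅P', (⊤ : Subgroup G)⁆ ≤ R)
            (Subgroup.commutator_mem_commutator hz (Subgroup.mem_top g))
        · exact fun g => (le_sup_right : ⁅K, (⊤ : Subgroup G)⁆ ≤ R)
            (Subgroup.commutator_mem_commutator hz (Subgroup.mem_top g))
      · intro g
        rw [commutatorElement_one_left]; exact R.one_mem
      · intro y₁ y₂ _ _ h1 h2
        intro g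
        have e : ⁅y₁ * y₂, g⁆ = (y₁ * ⁅y₂, g⁆ * y₁⁻¹) * ⁅y₁, g⁆ := by
          simp only [commutatorElement_def]; group
        rw [e]
        exact R.mul_mem (hRn.conj_mem _ (h2 g) y₁) (h1 g)
      · intro y _ h1
        intro g
        have e : ⁅y⁻¹, g⁆ = y⁻¹ * ⁅y, g⁆⁻¹ * y := by
          simp only [commutatorElement_def]; group
        rw [e]
        have := hRn.conj_mem _ (R.inv_mem (h1 g)) y⁻¹
        simpa using this
    have hNR : N ≤ R := by
      conv_lhs => rw [← hNcomm]
      rw [Subgroup.commutator_le]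
      intro n hn g _
      refine hNcommR n ?_ g
      rw [Subgroup.closure_union, Subgroup.closure_eq, Subgroup.closure_eq, hNsup]
      exact hn
    intro x hx
    have hx' : x ∈ ((((⁅P', (⊤ : Subgroup G)⁆ : Subgroup G) : Set G)) *
        (((⁅K, (⊤ : Subgroup G)⁆ : Subgroup G) : Set G))) := by
      rw [← Subgroup.mul_normal ⁅P', (⊤ : Subgroup G)⁆ ⁅K, (⊤ : Subgroup G)⁆, ← hRdef]
      exact hNR (hP'N hx)
    obtain ⟨a, ha, b, hb, rfl⟩ := hx'
    have haP : a ∈ P' := Subgroup.commutator_le_left P' ⊤ ha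
    have hbP : b ∈ P' := by
      have e : b = a⁻¹ * (a * b) := by group
      rw [e]; exact P'.mul_mem (P'.inv_mem haP) hx
    have hbK : b ∈ K := Subgroup.commutator_le_left K ⊤ hb
    have hb1 : b ∈ P' ⊓ K := Subgroup.mem_inf.mpr ⟨hbP, hbK⟩
    rw [hPKbot, Subgroup.mem_bot] at hb1
    rw [hb1]
    simpa using ha
  -- the Hall p'-type subgroup L = H ⊔ N is normal
  haveI : Finite (G ⧸ N) := Quotient.finite _
  obtain ⟨k, hk⟩ := hHi
  set π : G →* G ⧸ N := QuotientGroup.mk' N with hπdef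
  have hπs : Function.Surjective π := QuotientGroup.mk'_surjective N
  set Θ : Subgroup (G ⧸ N) := H.map π with hΘdef
  have hΘcard : Nat.card Θ ∣ Nat.card H :=
    Subgroup.card_dvd_of_surjective _ (π.subgroupMap_surjective H)
  have hpΘ : ¬ p ∣ Nat.card Θ := fun hd => hH (hd.trans hΘcard)
  have hΘidx : Θ.index ∣ p ^ k := by
    have h9 := Subgroup.index_map_dvd (H := H) hπs
    rw [hk] at h9; exact h9
  obtain ⟨j, -, hj⟩ := (Nat.dvd_prime_pow hp).mp hΘidx
  have hΘcop : (Nat.card Θ).Coprime Θ.index := by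
    rw [hj]
    exact Nat.Coprime.pow_right _ (Nat.coprime_comm.mp (hp.coprime_iff_not_dvd.mpr hpΘ))
  have hΘnorm : Θ.Normal := hall_normal hΓnil Θ hΘcop
  set L : Subgroup G := Θ.comap π with hLdef
  haveI hLnorm : L.Normal := hΘnorm.comap π
  have hLidx : L.index = p ^ j := by
    rw [hLdef, Subgroup.index_comap_of_surjective Θ hπs, hj]
  have hLeq : L = H ⊔ N := by
    rw [hLdef, hΘdef, Subgroup.comap_map_eq, hπdef, QuotientGroup.ker_mk']
  -- apply lemmaX with S = [P', L] ⊔ D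
  haveI : (⁅P', L⁆).Normal := Subgroup.commutator_normal _ _
  haveI hSnorm : (⁅P', L⁆ ⊔ D).Normal := Subgroup.sup_normal _ _
  have hSP' : ⁅P', L⁆ ⊔ D ≤ P' := sup_le (Subgroup.commutator_le_left _ _) hDP'
  have hPS : P' ≤ ⁅P', L⁆ ⊔ D := by
    refine lemmaX P' (⁅P', L⁆ ⊔ D) L hP'norm hSnorm hSP' hP'p le_sup_left hLidx ?_
    rw [hPtop]
    exact le_sup_left
  have hSM : ⁅P', L⁆ ⊔ D ≤ M := by
    refine sup_le ?_ hDM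
    rw [hLeq]
    exact hPLM
  have hPM : P' ≤ M := hPS.trans hSM
  -- perfect trick: P'/W is a perfect p-group, hence trivial
  haveI hW₀norm : (W.subgroupOf P').Normal := by
    constructor
    rintro ⟨m, hmP⟩ hm ⟨g, hgP⟩
    rw [Subgroup.mem_subgroupOf] at hm ⊢
    exact hWconjP g hgP m hm
  have htop : (⊤ : Subgroup ↥P') ≤
      W.subgroupOf P' ⊔ ⁅(⊤ : Subgroup ↥P'), (⊤ : Subgroup ↥P')⁆ := by
    rw [← Subgroup.map_le_map_iff_of_injective (f := P'.subtype) P'.subtype_injective]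
    rw [Subgroup.map_sup, Subgroup.map_commutator, ← MonoidHom.range_eq_map,
      Subgroup.range_subtype, Subgroup.subgroupOf_map_subtype, inf_eq_left.mpr hWP']
    rw [hMdef, hDdef] at hPM
    exact hPM
  set πq : ↥P' →* ↥P' ⧸ W.subgroupOf P' := QuotientGroup.mk' _ with hπqdef
  have hπqs : Function.Surjective πq := QuotientGroup.mk'_surjective _
  have hXperf : ∀ n, lowerCentralSeries (↥P' ⧸ W.subgroupOf P') n = ⊤ := by
    have hder : (⊤ : Subgroup (↥P' ⧸ W.subgroupOf P')) ≤
        ⁅(⊤ : Subgroup (↥P' ⧸ W.subgroupOf P')), (⊤ : Subgroup (↥P' ⧸ W.subgroupOf P'))⁆ := by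
      have h1 := Subgroup.map_mono (f := πq) htop
      rw [Subgroup.map_top_of_surjective πq hπqs] at h1
      refine h1.trans ?_
      rw [Subgroup.map_sup, Subgroup.map_commutator, Subgroup.map_top_of_surjective πq hπqs]
      have h2 : (W.subgroupOf P').map πq = ⊥ := by
        rw [Subgroup.map_eq_bot_iff, hπqdef, QuotientGroup.ker_mk']
      rw [h2, bot_sup_eq]
    intro n
    induction n with
    | zero => exact lowerCentralSeries_zero
    | succ n ih =>
      rw [← lcs_succ', ih]
      exact le_antisymm le_top hder
  haveI : Finite (↥P' ⧸ W.subgroupOf P') := Quotient.finite _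
  have hXnil : Group.IsNilpotent (↥P' ⧸ W.subgroupOf P') :=
    (hP'p.to_quotient (W.subgroupOf P')).isNilpotent
  obtain ⟨n, hn⟩ := nilpotent_iff_lowerCentralSeries.mp hXnil
  have hbotX : (⊤ : Subgroup (↥P' ⧸ W.subgroupOf P')) = ⊥ := (hXperf n).symm.trans hn
  have hPW : P' ≤ W := by
    intro x hx
    have h1 : πq ⟨x, hx⟩ ∈ (⊥ : Subgroup (↥P' ⧸ W.subgroupOf P')) := by
      rw [← hbotX]; exact Subgroup.mem_top _
    rw [Subgroup.mem_bot] at h1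
    have h2 : (⟨x, hx⟩ : ↥P') ∈ W.subgroupOf P' := (QuotientGroup.eq_one_iff _).mp h1
    exact Subgroup.mem_subgroupOf.mp h2
  exact le_antisymm hPW hWP'


end Stmt10

/-- Lemma 4.1: let `G` be a finite metanilpotent group, `P` a Sylow `p`-subgroup of the
nilpotent residual `γ_∞(G)`, and `H` a Hall `p'`-subgroup of `G`.  Then `P = [P, H]`. -/
theorem stmt10 (G : Type) [Group G] [Finite G] (p : ℕ) (hp : p.Prime)
    (hmeta : Group.IsNilpotent ↥(nilpotentResidual G))
    (P : Sylow p ↥(nilpotentResidual G))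
    (H : Subgroup G) (hH : ¬ p ∣ Nat.card H) (hHi : ∃ k : ℕ, H.index = p ^ k) :
    ((P : Subgroup ↥(nilpotentResidual G)).map (nilpotentResidual G).subtype) =
      ⁅(P : Subgroup ↥(nilpotentResidual G)).map (nilpotentResidual G).subtype, H⁆ := by
  haveI : Fact p.Prime := ⟨hp⟩
  haveI hNnorm : (nilpotentResidual G).Normal := Stmt10.residual_normal G
  exact Stmt10.main_aux G p hp (nilpotentResidual G) hNnorm hmeta (Stmt10.residual_comm G)
    (Stmt10.residual_quot_nilp G) (P : Subgroup ↥(nilpotentResidual G)) P.card_coprime_index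
    P.not_dvd_index P.isPGroup' H hH hHi
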